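/- Fix a real conductivity exponent m > 3 and B > 0, and set b(ζ) = B·ζ^{m/(m−2)}. For every σ ∈ ℝ there exists exactly one function v : [0,∞) → ℝ that is continuously differentiable on [0,∞), twice continuously differentiable on (0,∞), satisfies −ζ·v''(ζ) − v'(ζ)/(m−2) + b(ζ)·v(ζ) = σ·v(ζ) for all ζ > 0, and is normalized by v(0) = 1. Moreover this solution satisfies v'(0) = −(m−2)·σ. -/

import Mathlib

/-!
With `a = 1/(m-2) ∈ (0, 1)` and `G ζ = B ζ^(m/(m-2)) - σ`, the equation reads
`(ζ^a v')' = ζ^(a-1) G v`. Integrating twice from `0` (where `ζ^a v'` vanishes because `v'` is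
bounded) turns a regular solution into a continuous solution of the Volterra equation `v = 1 + T v`,
`T h ζ = ∫₀^ζ s^(-a) ∫₀^s t^(a-1) G t h t dt ds`; both kernels are integrable since `0 < a < 1`.
Conversely a continuous fixed point of `v ↦ 1 + T v` is `C²` on `(0, ∞)`, solves the ODE, and by
L'Hôpital has `v'(0) = G 0 v 0 / a = -(m-2) σ`. On `[0, Z]` with `|G| ≤ c` the iterates obey
`|Tⁿ h ζ| ≤ M (c ζ / a)ⁿ / n!` when `|h| ≤ M`: hence the Neumann series `∑ Tⁿ 1` converges locally
uniformly to a fixed point (existence), and the difference of two fixed points, being a fixed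
point of `T`, vanishes (uniqueness).
-/

open Filter Set

/-- A regular solution of the singular ODE
`-ζ·v'' - v'/(m-2) + B·ζ^{m/(m-2)}·v = σ·v` on `(0,∞)`:
continuously differentiable on `[0,∞)`, twice continuously differentiable on
`(0,∞)`, and normalized by `v 0 = 1`. -/
def RegSol (m B σ : ℝ) (v : ℝ → ℝ) : Prop :=
  ContDiffOn ℝ 1 v (Set.Ici 0) ∧
  ContDiffOn ℝ 2 v (Set.Ioi 0) ∧
  (∀ ζ : ℝ, 0 < ζ →
    -ζ * deriv (deriv v) ζ - deriv v ζ / (m - 2)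
      + B * ζ ^ (m / (m - 2)) * v ζ = σ * v ζ) ∧
  v 0 = 1

open MeasureTheory intervalIntegral Topology
open scoped Nat

namespace SingularODE

/-- Integrating up to `max ζ 0` makes the function vanish on `(-∞, 0]`, so identities between
such functions hold on all of `ℝ` although only values on `[0, ∞)` enter. -/
noncomputable def weightedIntegral (β : ℝ) (h : ℝ → ℝ) (ζ : ℝ) : ℝ :=
  ∫ t in (0 : ℝ)..max ζ 0, t ^ β * h t

section WeightedIntegral

variable {β ζ : ℝ} {h : ℝ → ℝ}

lemma weightedIntegral_of_nonneg (hζ : 0 ≤ ζ) :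
    weightedIntegral β h ζ = ∫ t in (0 : ℝ)..ζ, t ^ β * h t := by
  rw [weightedIntegral, max_eq_left hζ]

@[simp]
lemma weightedIntegral_apply_zero : weightedIntegral β h 0 = 0 := by
  simp [weightedIntegral]

lemma intervalIntegrable_rpow_mul (hβ : -1 < β) (hζ : 0 ≤ ζ) (hh : ContinuousOn h (Ici 0)) :
    IntervalIntegrable (fun t => t ^ β * h t) volume 0 ζ :=
  (intervalIntegrable_rpow' hβ).mul_continuousOn
    (hh.mono (by simp [uIcc_of_le hζ, Icc_subset_Ici_self]))

lemma continuous_weightedIntegral (hβ : -1 < β) (hh : ContinuousOn h (Ici 0)) :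
    Continuous (weightedIntegral β h) := by
  have hprim : ContinuousOn (fun ζ => ∫ t in (0 : ℝ)..ζ, t ^ β * h t) (Ici 0) := by
    refine continuousOn_of_locally_continuousOn fun x hx => ⟨Iio (x + 1), isOpen_Iio, by simp, ?_⟩
    have hx1 : (0 : ℝ) ≤ x + 1 := by linarith [mem_Ici.mp hx]
    refine (continuousOn_primitive_interval' (intervalIntegrable_rpow_mul hβ hx1 hh)
      left_mem_uIcc).mono ?_
    rw [uIcc_of_le hx1]
    exact fun t ht => ⟨ht.1, ht.2.le⟩
  exact hprim.comp_continuous (continuous_id.max continuous_const) fun x => le_max_right x 0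

lemma hasDerivAt_weightedIntegral (hβ : -1 < β) (hh : ContinuousOn h (Ici 0)) (hζ : 0 < ζ) :
    HasDerivAt (weightedIntegral β h) (ζ ^ β * h ζ) ζ := by
  have hcont : ContinuousOn (fun t => t ^ β * h t) (Ioi 0) :=
    (continuousOn_id.rpow_const fun t ht => Or.inl (ne_of_gt ht)).mul (hh.mono Ioi_subset_Ici_self)
  have H := integral_hasDerivAt_right (intervalIntegrable_rpow_mul hβ hζ.le hh)
    (hcont.stronglyMeasurableAtFilter isOpen_Ioi ζ hζ) (hcont.continuousAt (Ioi_mem_nhds hζ))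
  refine H.congr_of_eventuallyEq ?_
  filter_upwards [Ioi_mem_nhds hζ] with y hy
  exact weightedIntegral_of_nonneg (le_of_lt hy)

lemma abs_weightedIntegral_le {γ C : ℝ} (hβγ : -1 < β + γ) (hζ : 0 ≤ ζ)
    (hb : ∀ t ∈ Icc 0 ζ, |h t| ≤ C * t ^ γ) :
    |weightedIntegral β h ζ| ≤ C * ζ ^ (β + γ + 1) / (β + γ + 1) := by
  have hval : ∫ t in (0 : ℝ)..ζ, C * t ^ (β + γ) = C * ζ ^ (β + γ + 1) / (β + γ + 1) := by
    rw [intervalIntegral.integral_const_mul, integral_rpow (Or.inl hβγ),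
      Real.zero_rpow (by linarith)]
    ring
  rw [weightedIntegral_of_nonneg hζ, ← hval, ← Real.norm_eq_abs]
  refine norm_integral_le_of_norm_le hζ (Eventually.of_forall fun t ht => ?_)
    ((intervalIntegrable_rpow' hβγ).const_mul C)
  have ht0 : 0 < t := ht.1
  rw [norm_mul, Real.norm_of_nonneg (Real.rpow_nonneg ht0.le β), Real.norm_eq_abs,
    Real.rpow_add ht0, mul_left_comm]
  exact mul_le_mul_of_nonneg_left (hb t ⟨ht0.le, ht.2⟩) (Real.rpow_nonneg ht0.le β)

lemma weightedIntegral_sub {k : ℝ → ℝ} (hβ : -1 < β) (hh : ContinuousOn h (Ici 0))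
    (hk : ContinuousOn k (Ici 0)) :
    weightedIntegral β (h - k) = weightedIntegral β h - weightedIntegral β k := by
  ext ζ
  simp only [weightedIntegral, Pi.sub_apply, mul_sub]
  exact integral_sub (intervalIntegrable_rpow_mul hβ (le_max_right ζ 0) hh)
    (intervalIntegrable_rpow_mul hβ (le_max_right ζ 0) hk)

lemma weightedIntegral_sum {ι : Type*} {s : Finset ι} {f : ι → ℝ → ℝ} (hβ : -1 < β)
    (hf : ∀ i ∈ s, ContinuousOn (f i) (Ici 0)) :
    weightedIntegral β (∑ i ∈ s, f i) = ∑ i ∈ s, weightedIntegral β (f i) := by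
  ext ζ
  simp only [weightedIntegral, Finset.sum_apply, Finset.mul_sum]
  exact integral_finsetSum fun i hi => intervalIntegrable_rpow_mul hβ (le_max_right ζ 0) (hf i hi)

lemma weightedIntegral_eq_sub_of_hasDerivAt {g : ℝ → ℝ} (hβ : -1 < β) (hh : ContinuousOn h (Ici 0))
    (hζ : 0 ≤ ζ) (hg : ContinuousOn g (Icc 0 ζ))
    (hg' : ∀ s ∈ Ioo 0 ζ, HasDerivAt g (s ^ β * h s) s) :
    weightedIntegral β h ζ = g ζ - g 0 := by
  rw [weightedIntegral_of_nonneg hζ]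
  exact integral_eq_sub_of_hasDerivAt_of_le hζ hg hg' (intervalIntegrable_rpow_mul hβ hζ hh)

lemma tendsto_weightedIntegral_div_rpow (hβ : -1 < β) (hh : ContinuousOn h (Ici 0)) :
    Tendsto (fun ζ => weightedIntegral β h ζ / ζ ^ (β + 1)) (𝓝[>] 0) (𝓝 (h 0 / (β + 1))) := by
  have hβ1 : 0 < β + 1 := by linarith
  have hzero : ∀ f : ℝ → ℝ, Continuous f → f 0 = 0 → Tendsto f (𝓝[>] 0) (𝓝 0) := fun f hf hf0 => by
    simpa only [hf0] using (hf.tendsto 0).mono_left (nhdsWithin_le_nhds (s := Ioi 0))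
  refine HasDerivAt.lhopital_zero_right_on_Ioo (f' := fun t => t ^ β * h t)
    (g' := fun t => (β + 1) * t ^ β) zero_lt_one
    (fun t ht => hasDerivAt_weightedIntegral hβ hh ht.1)
    (fun t ht => by simpa using Real.hasDerivAt_rpow_const (p := β + 1) (Or.inl ht.1.ne'))
    (fun t ht => mul_ne_zero hβ1.ne' (Real.rpow_pos_of_pos ht.1 β).ne')
    (hzero _ (continuous_weightedIntegral hβ hh) weightedIntegral_apply_zero)
    (hzero _ (Real.continuous_rpow_const hβ1.le) (Real.zero_rpow hβ1.ne')) ?_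
  have hlim : Tendsto (fun t => h t / (β + 1)) (𝓝[>] 0) (𝓝 (h 0 / (β + 1))) :=
    ((hh 0 self_mem_Ici).mono Ioi_subset_Ici_self).tendsto.div_const _
  refine hlim.congr' ?_
  filter_upwards [self_mem_nhdsWithin] with t (ht : 0 < t)
  field_simp [(Real.rpow_pos_of_pos ht β).ne']

lemma contDiffOn_weightedIntegral {n : ℕ} (hβ : -1 < β) (hh : ContinuousOn h (Ici 0))
    (hn : ContDiffOn ℝ n h (Ioi 0)) : ContDiffOn ℝ (n + 1) (weightedIntegral β h) (Ioi 0) := by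
  rw [contDiffOn_succ_iff_deriv_of_isOpen isOpen_Ioi]
  refine ⟨fun ζ hζ =>
    (hasDerivAt_weightedIntegral hβ hh hζ).differentiableAt.differentiableWithinAt, by simp, ?_⟩
  have hrpow : ContDiffOn ℝ n (fun t : ℝ => t ^ β) (Ioi 0) :=
    contDiffOn_id.rpow_const_of_ne fun t ht => ne_of_gt ht
  exact (hrpow.mul hn).congr fun ζ hζ => (hasDerivAt_weightedIntegral hβ hh hζ).deriv

end WeightedIntegral

noncomputable def volterra (a : ℝ) (G h : ℝ → ℝ) : ℝ → ℝ :=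
  weightedIntegral (-a) (weightedIntegral (a - 1) (G * h))

section Volterra

variable {a c Z : ℝ} {G h : ℝ → ℝ}

lemma continuous_volterra (ha0 : 0 < a) (ha1 : a < 1) (hG : ContinuousOn G (Ici 0))
    (hh : ContinuousOn h (Ici 0)) : Continuous (volterra a G h) :=
  continuous_weightedIntegral (by linarith)
    (continuous_weightedIntegral (by linarith) (hG.mul hh)).continuousOn

lemma volterra_sub {k : ℝ → ℝ} (ha0 : 0 < a) (ha1 : a < 1) (hG : ContinuousOn G (Ici 0))
    (hh : ContinuousOn h (Ici 0)) (hk : ContinuousOn k (Ici 0)) :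
    volterra a G (h - k) = volterra a G h - volterra a G k := by
  rw [volterra, mul_sub, weightedIntegral_sub (by linarith) (hG.mul hh) (hG.mul hk),
    weightedIntegral_sub (by linarith)
      (continuous_weightedIntegral (by linarith) (hG.mul hh)).continuousOn
      (continuous_weightedIntegral (by linarith) (hG.mul hk)).continuousOn]
  rfl

lemma volterra_sum {ι : Type*} {s : Finset ι} {f : ι → ℝ → ℝ} (ha0 : 0 < a) (ha1 : a < 1)
    (hG : ContinuousOn G (Ici 0)) (hf : ∀ i ∈ s, ContinuousOn (f i) (Ici 0)) :
    volterra a G (∑ i ∈ s, f i) = ∑ i ∈ s, volterra a G (f i) := by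
  rw [volterra, Finset.mul_sum, weightedIntegral_sum (by linarith) fun i hi => hG.mul (hf i hi),
    weightedIntegral_sum (by linarith) fun i hi =>
      (continuous_weightedIntegral (by linarith) (hG.mul (hf i hi))).continuousOn]
  rfl

lemma abs_volterra_le {C : ℝ} {n : ℕ} (ha0 : 0 < a) (hGc : ∀ t ∈ Icc 0 Z, |G t| ≤ c)
    (hC : 0 ≤ C) (hh : ∀ t ∈ Icc 0 Z, |h t| ≤ C * t ^ n) :
    ∀ ζ ∈ Icc 0 Z, |volterra a G h ζ| ≤ c * C / a * ζ ^ (n + 1) / (n + 1) := by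
  intro ζ hζ
  have hn : (0 : ℝ) ≤ n := n.cast_nonneg
  have hc : 0 ≤ c := (abs_nonneg _).trans (hGc 0 ⟨le_rfl, hζ.1.trans hζ.2⟩)
  have hinner : ∀ s ∈ Icc 0 ζ,
      |weightedIntegral (a - 1) (G * h) s| ≤ c * C / a * s ^ ((n : ℝ) + a) := by
    intro s hs
    have hbound := abs_weightedIntegral_le (β := a - 1) (γ := n) (C := c * C) (h := G * h)
      (by linarith) hs.1 fun t ht => by
        have htZ : t ∈ Icc 0 Z := ⟨ht.1, ht.2.trans (hs.2.trans hζ.2)⟩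
        rw [Pi.mul_apply, abs_mul, Real.rpow_natCast, mul_assoc]
        exact mul_le_mul (hGc t htZ) (hh t htZ) (abs_nonneg _) hc
    rw [show a - 1 + n + 1 = n + a by ring] at hbound
    calc _ ≤ c * C * s ^ ((n : ℝ) + a) / (n + a) := hbound
      _ ≤ c * C * s ^ ((n : ℝ) + a) / a :=
          div_le_div_of_nonneg_left (by positivity [hs.1]) ha0 (by linarith)
      _ = _ := by ring
  have houter := abs_weightedIntegral_le (β := -a) (by linarith) hζ.1 hinner
  rwa [show -a + (n + a) + 1 = ((n + 1 : ℕ) : ℝ) by push_cast; ring, Real.rpow_natCast,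
    Nat.cast_succ] at houter

lemma abs_le_pow_div_factorial_of_volterra {M : ℝ} {u : ℕ → ℝ → ℝ} (ha0 : 0 < a)
    (hGc : ∀ t ∈ Icc 0 Z, |G t| ≤ c) (hM : 0 ≤ M) (hu0 : ∀ t ∈ Icc 0 Z, |u 0 t| ≤ M)
    (hu : ∀ n, ∀ t ∈ Icc 0 Z, u (n + 1) t = volterra a G (u n) t) (n : ℕ) :
    ∀ ζ ∈ Icc 0 Z, |u n ζ| ≤ M * (c / a * ζ) ^ n / n ! := by
  induction n with
  | zero => simpa using hu0
  | succ n ih =>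
    intro ζ hζ
    have hc : 0 ≤ c := (abs_nonneg _).trans (hGc 0 ⟨le_rfl, hζ.1.trans hζ.2⟩)
    have hC : 0 ≤ M * (c / a) ^ n / n ! := by positivity
    have hstep := abs_volterra_le (C := M * (c / a) ^ n / n !) ha0 hGc hC
      (fun t ht => (ih t ht).trans_eq (by ring)) ζ hζ
    rw [hu n ζ hζ]
    refine hstep.trans_eq ?_
    rw [Nat.factorial_succ, Nat.cast_mul, Nat.cast_succ, mul_pow, pow_succ, pow_succ]
    field_simp

lemma eqOn_zero_of_eq_volterra {d : ℝ → ℝ} (ha0 : 0 < a) (hG : ContinuousOn G (Ici 0))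
    (hd : ContinuousOn d (Ici 0)) (hfix : ∀ ζ, 0 ≤ ζ → d ζ = volterra a G d ζ) :
    EqOn d 0 (Ici 0) := by
  intro Z (hZ : 0 ≤ Z)
  obtain ⟨c, hc⟩ := isCompact_Icc.exists_bound_of_continuousOn (hG.mono Icc_subset_Ici_self)
  obtain ⟨M, hM⟩ := isCompact_Icc.exists_bound_of_continuousOn (hd.mono Icc_subset_Ici_self)
  simp only [Real.norm_eq_abs] at hc hM
  have hbound := abs_le_pow_div_factorial_of_volterra (u := fun _ => d) ha0 hc
    ((abs_nonneg _).trans (hM Z ⟨hZ, le_rfl⟩)) hM (fun _ t ht => hfix t ht.1)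
  have hlim : Tendsto (fun n => M * (c / a * Z) ^ n / n !) atTop (𝓝 0) := by
    simpa [mul_div_assoc] using
      (FloorSemiring.tendsto_pow_div_factorial_atTop (c / a * Z)).const_mul M
  exact abs_eq_zero.1 (le_antisymm (ge_of_tendsto' hlim fun n => hbound n Z ⟨hZ, le_rfl⟩)
    (abs_nonneg _))

lemma tendsto_volterra_of_tendstoUniformlyOn {H : ℕ → ℝ → ℝ} {ζ : ℝ} (ha0 : 0 < a) (ha1 : a < 1)
    (hG : ContinuousOn G (Ici 0)) (hH : ∀ N, ContinuousOn (H N) (Ici 0))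
    (hh : ContinuousOn h (Ici 0)) (hζ : 0 ≤ ζ) (hu : TendstoUniformlyOn H h atTop (Icc 0 ζ)) :
    Tendsto (fun N => volterra a G (H N) ζ) atTop (𝓝 (volterra a G h ζ)) := by
  obtain ⟨c, hc⟩ := isCompact_Icc.exists_bound_of_continuousOn (hG.mono Icc_subset_Ici_self)
  simp only [Real.norm_eq_abs] at hc
  have hc0 : 0 ≤ c := (abs_nonneg _).trans (hc 0 ⟨le_rfl, hζ⟩)
  set K := c / a * ζ + 1
  have hK : 0 < K := by positivity
  rw [Metric.tendsto_atTop]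
  intro ε hε
  obtain ⟨N, hN⟩ := eventually_atTop.1
    (Metric.tendstoUniformlyOn_iff.1 hu (ε / K) (div_pos hε hK))
  refine ⟨N, fun n hn => ?_⟩
  have hbound := abs_volterra_le (h := H n - h) (n := 0) (C := ε / K) ha0 hc (div_pos hε hK).le
    (fun t ht => by simpa [abs_sub_comm, Real.dist_eq] using (hN n hn t ht).le) ζ ⟨hζ, le_rfl⟩
  rw [Real.dist_eq, ← Pi.sub_apply (volterra a G (H n)), ← volterra_sub ha0 ha1 hG (hH n) hh]
  calc _ ≤ ε * ((c / a * ζ) / K) := hbound.trans_eq (by ring)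
    _ < ε := mul_lt_of_lt_one_right hε ((div_lt_one hK).2 (lt_add_one _))

end Volterra

noncomputable def volterraSeries (a : ℝ) (G : ℝ → ℝ) (ζ : ℝ) : ℝ :=
  ∑' n, (volterra a G)^[n] 1 ζ

section VolterraSeries

variable {a c Z : ℝ} {G : ℝ → ℝ}

lemma continuousOn_volterra_iterate (ha0 : 0 < a) (ha1 : a < 1) (hG : ContinuousOn G (Ici 0))
    (n : ℕ) : ContinuousOn ((volterra a G)^[n] 1) (Ici 0) := by
  induction n with
  | zero => exact continuousOn_const
  | succ n ih =>
    rw [Function.iterate_succ']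
    exact (continuous_volterra ha0 ha1 hG ih).continuousOn

lemma abs_volterra_iterate_le (ha0 : 0 < a) (hGc : ∀ t ∈ Icc 0 Z, |G t| ≤ c) (n : ℕ) :
    ∀ ζ ∈ Icc 0 Z, |(volterra a G)^[n] 1 ζ| ≤ (c / a * Z) ^ n / n ! := by
  rintro ζ ⟨hζ0, hζZ⟩
  have hc : 0 ≤ c := (abs_nonneg _).trans (hGc 0 ⟨le_rfl, hζ0.trans hζZ⟩)
  have hbound := abs_le_pow_div_factorial_of_volterra (u := fun n => (volterra a G)^[n] 1) ha0
    hGc zero_le_one (by simp) (fun n t _ => by rw [Function.iterate_succ_apply']) n ζ ⟨hζ0, hζZ⟩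
  rw [one_mul] at hbound
  exact hbound.trans (by gcongr)

lemma tendstoUniformlyOn_volterraSeries (ha0 : 0 < a) (hG : ContinuousOn G (Ici 0)) (Z : ℝ) :
    TendstoUniformlyOn (fun N => ∑ n ∈ Finset.range N, (volterra a G)^[n] 1)
      (volterraSeries a G) atTop (Icc 0 Z) := by
  obtain ⟨c, hc⟩ := isCompact_Icc.exists_bound_of_continuousOn (hG.mono Icc_subset_Ici_self)
  simp only [Real.norm_eq_abs] at hc
  simp_rw [Finset.sum_fn]
  exact tendstoUniformlyOn_tsum_nat (Real.summable_pow_div_factorial (c / a * Z))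
    fun n ζ hζ => abs_volterra_iterate_le ha0 hc n ζ hζ

lemma continuousOn_volterraSeries (ha0 : 0 < a) (ha1 : a < 1) (hG : ContinuousOn G (Ici 0)) :
    ContinuousOn (volterraSeries a G) (Ici 0) := by
  refine continuousOn_of_locally_continuousOn fun x _ => ⟨Iio (x + 1), isOpen_Iio, by simp, ?_⟩
  refine ((tendstoUniformlyOn_volterraSeries ha0 hG (x + 1)).continuousOn
    (Frequently.of_forall fun N => by
      rw [Finset.sum_fn]
      exact continuousOn_finsetSum _ fun n _ =>
        (continuousOn_volterra_iterate ha0 ha1 hG n).mono Icc_subset_Ici_self)).mono ?_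
  exact fun t ht => ⟨ht.1, ht.2.le⟩

lemma volterraSeries_eq (ha0 : 0 < a) (ha1 : a < 1) (hG : ContinuousOn G (Ici 0)) {ζ : ℝ}
    (hζ : 0 ≤ ζ) : volterraSeries a G ζ = 1 + volterra a G (volterraSeries a G) ζ := by
  set S : ℕ → ℝ → ℝ := fun N => ∑ n ∈ Finset.range N, (volterra a G)^[n] 1
  have hS : ∀ N, ContinuousOn (S N) (Ici 0) := fun N => by
    simp only [S, Finset.sum_fn]
    exact continuousOn_finsetSum _ fun n _ => continuousOn_volterra_iterate ha0 ha1 hG n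
  have hrec : ∀ N, S (N + 1) = 1 + volterra a G (S N) := fun N => by
    simp only [S, volterra_sum ha0 ha1 hG fun n _ => continuousOn_volterra_iterate ha0 ha1 hG n,
      Finset.sum_range_succ', Function.iterate_succ_apply', Function.iterate_zero_apply, add_comm]
  have hlim : Tendsto (fun N => S (N + 1) ζ) atTop (𝓝 (volterraSeries a G ζ)) :=
    ((tendstoUniformlyOn_volterraSeries ha0 hG ζ).tendsto_at ⟨hζ, le_rfl⟩).comp
      (tendsto_add_atTop_nat 1)
  simp only [hrec, Pi.add_apply, Pi.one_apply] at hlim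
  have hT := tendsto_volterra_of_tendstoUniformlyOn ha0 ha1 hG hS
    (continuousOn_volterraSeries ha0 ha1 hG) hζ (tendstoUniformlyOn_volterraSeries ha0 hG ζ)
  exact tendsto_nhds_unique hlim (hT.const_add 1)

end VolterraSeries

lemma hasDerivAt_rpow_mul {u : ℝ → ℝ} {a u' ζ : ℝ} (hζ : 0 < ζ) (hu : HasDerivAt u u' ζ) :
    HasDerivAt (fun s => s ^ a * u s) (ζ ^ (a - 1) * (ζ * u' + a * u ζ)) ζ := by
  refine ((Real.hasDerivAt_rpow_const (p := a) (Or.inl hζ.ne')).mul hu).congr_deriv ?_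
  rw [show ζ ^ a = ζ ^ (a - 1) * ζ by rw [← Real.rpow_add_one hζ.ne']; ring_nf]
  ring

section FixedPoint

variable {a : ℝ} {G v : ℝ → ℝ} (ha0 : 0 < a) (ha1 : a < 1) (hG : ContinuousOn G (Ici 0))
  (hv : ContinuousOn v (Ici 0)) (hfix : ∀ ζ, 0 ≤ ζ → v ζ = 1 + volterra a G v ζ)

include ha0 ha1 hG hv hfix

lemma hasDerivAt_of_eq_volterra {ζ : ℝ} (hζ : 0 < ζ) :
    HasDerivAt v (ζ ^ (-a) * weightedIntegral (a - 1) (G * v) ζ) ζ := by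
  have hF : ContinuousOn (weightedIntegral (a - 1) (G * v)) (Ici 0) :=
    (continuous_weightedIntegral (by linarith) (hG.mul hv)).continuousOn
  have H := (hasDerivAt_weightedIntegral (β := -a) (by linarith) hF hζ).const_add 1
  refine H.congr_of_eventuallyEq ?_
  filter_upwards [Ioi_mem_nhds hζ] with s hs using hfix s (le_of_lt hs)

lemma tendsto_deriv_of_eq_volterra :
    Tendsto (deriv v) (𝓝[>] 0) (𝓝 (G 0 * v 0 / a)) := by
  have hlim := tendsto_weightedIntegral_div_rpow (β := a - 1) (by linarith) (hG.mul hv)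
  rw [sub_add_cancel] at hlim
  refine hlim.congr' ?_
  filter_upwards [self_mem_nhdsWithin] with x (hx : 0 < x)
  rw [(hasDerivAt_of_eq_volterra ha0 ha1 hG hv hfix hx).deriv, Real.rpow_neg hx.le, div_eq_inv_mul]

lemma hasDerivWithinAt_zero_of_eq_volterra : HasDerivWithinAt v (G 0 * v 0 / a) (Ici 0) 0 :=
  hasDerivWithinAt_Ici_of_tendsto_deriv
    (fun _ hx =>
      (hasDerivAt_of_eq_volterra ha0 ha1 hG hv hfix hx).differentiableAt.differentiableWithinAt)
    ((hv 0 self_mem_Ici).mono Ioi_subset_Ici_self) self_mem_nhdsWithin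
    (tendsto_deriv_of_eq_volterra ha0 ha1 hG hv hfix)

lemma contDiffOn_Ici_of_eq_volterra : ContDiffOn ℝ 1 v (Ici 0) := by
  have hderiv : ∀ x, 0 < x → derivWithin v (Ici 0) x = deriv v x := fun x hx =>
    derivWithin_of_mem_nhds (Ici_mem_nhds hx)
  have hzero := hasDerivWithinAt_zero_of_eq_volterra ha0 ha1 hG hv hfix
  rw [contDiffOn_one_iff_derivWithin (uniqueDiffOn_Ici 0)]
  constructor
  · intro x hx
    rcases (mem_Ici.mp hx).eq_or_lt with h0 | hx
    · exact h0 ▸ hzero.differentiableWithinAt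
    · exact (hasDerivAt_of_eq_volterra ha0 ha1 hG hv hfix hx).differentiableAt
        |>.differentiableWithinAt
  · intro x hx
    rcases (mem_Ici.mp hx).eq_or_lt with rfl | hx
    · rw [← continuousWithinAt_Ioi_iff_Ici, ContinuousWithinAt,
        hzero.derivWithin (uniqueDiffOn_Ici 0 0 self_mem_Ici)]
      refine (tendsto_deriv_of_eq_volterra ha0 ha1 hG hv hfix).congr' ?_
      filter_upwards [self_mem_nhdsWithin] with y hy using (hderiv y hy).symm
    · have hψ : ContinuousAt (fun y => y ^ (-a) * weightedIntegral (a - 1) (G * v) y) x :=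
        (Real.continuousAt_rpow_const x (-a) (Or.inl hx.ne')).mul
          (continuous_weightedIntegral (β := a - 1) (by linarith) (hG.mul hv)).continuousAt
      refine (hψ.congr ?_).continuousWithinAt
      filter_upwards [Ioi_mem_nhds hx] with y hy
      rw [hderiv y hy, (hasDerivAt_of_eq_volterra ha0 ha1 hG hv hfix hy).deriv]

lemma contDiffOn_Ioi_of_eq_volterra : ContDiffOn ℝ 2 v (Ioi 0) := by
  have hGv : ContDiffOn ℝ (0 : ℕ) (G * v) (Ioi 0) :=
    contDiffOn_zero.2 ((hG.mul hv).mono Ioi_subset_Ici_self)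
  have hF := contDiffOn_weightedIntegral (β := a - 1) (by linarith) (hG.mul hv) hGv
  have hT := contDiffOn_weightedIntegral (β := -a) (n := 1) (by linarith)
    (continuous_weightedIntegral (β := a - 1) (by linarith) (hG.mul hv)).continuousOn
    (by simpa using hF)
  exact (contDiffOn_const.add hT).congr fun x hx => hfix x (le_of_lt hx)

lemma ode_of_eq_volterra {ζ : ℝ} (hζ : 0 < ζ) :
    ζ * deriv (deriv v) ζ + a * deriv v ζ = G ζ * v ζ := by
  set F := weightedIntegral (a - 1) (G * v)
  have hdv : deriv v =ᶠ[𝓝 ζ] fun s => s ^ (-a) * F s := by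
    filter_upwards [Ioi_mem_nhds hζ] with s hs using
      (hasDerivAt_of_eq_volterra ha0 ha1 hG hv hfix hs).deriv
  have hψ := (Real.hasDerivAt_rpow_const (p := -a) (Or.inl hζ.ne')).mul
    (hasDerivAt_weightedIntegral (β := a - 1) (by linarith) (hG.mul hv) hζ)
  have hflux : (fun s => s ^ a * deriv v s) =ᶠ[𝓝 ζ] F := by
    filter_upwards [hdv, Ioi_mem_nhds hζ] with s hs (hs0 : 0 < s)
    rw [hs, ← mul_assoc, ← Real.rpow_add hs0, add_neg_cancel, Real.rpow_zero, one_mul]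
  have h := (hasDerivAt_rpow_mul (a := a) hζ
    (hψ.differentiableAt.congr_of_eventuallyEq hdv).hasDerivAt).congr_of_eventuallyEq hflux.symm
  exact mul_left_cancel₀ (Real.rpow_pos_of_pos hζ _).ne'
    (h.unique (hasDerivAt_weightedIntegral (by linarith) (hG.mul hv) hζ))

end FixedPoint

structure IsRegularSolution (a : ℝ) (G v : ℝ → ℝ) : Prop where
  contDiffOn_Ici : ContDiffOn ℝ 1 v (Ici 0)
  contDiffOn_Ioi : ContDiffOn ℝ 2 v (Ioi 0)
  ode : ∀ ζ, 0 < ζ → ζ * deriv (deriv v) ζ + a * deriv v ζ = G ζ * v ζ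
  apply_zero : v 0 = 1

namespace IsRegularSolution

variable {a : ℝ} {G v w : ℝ → ℝ}

lemma rpow_mul_deriv_eq (hv : IsRegularSolution a G v) (ha0 : 0 < a)
    (hG : ContinuousOn G (Ici 0)) {ζ : ℝ} (hζ : 0 < ζ) :
    ζ ^ a * deriv v ζ = weightedIntegral (a - 1) (G * v) ζ := by
  set w := derivWithin v (Ici 0)
  have hw : ContinuousOn w (Ici 0) :=
    hv.contDiffOn_Ici.continuousOn_derivWithin (uniqueDiffOn_Ici 0) le_rfl
  have hwv : ∀ s, 0 < s → w s = deriv v s := fun s hs => derivWithin_of_mem_nhds (Ici_mem_nhds hs)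
  have hderiv2 : ∀ s, 0 < s → HasDerivAt (deriv v) (deriv (deriv v) s) s := fun s hs =>
    (((hv.contDiffOn_Ioi.deriv_of_isOpen isOpen_Ioi (by norm_num : (1 : WithTop ℕ∞) + 1 ≤ 2)
      ).differentiableOn one_ne_zero s hs).differentiableAt (Ioi_mem_nhds hs)).hasDerivAt
  have hflux := weightedIntegral_eq_sub_of_hasDerivAt (β := a - 1) (g := fun s => s ^ a * w s)
    (by linarith) (hG.mul hv.contDiffOn_Ici.continuousOn) hζ.le
    ((Real.continuous_rpow_const ha0.le).continuousOn.mul (hw.mono Icc_subset_Ici_self))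
    fun s hs => by
      have h := hasDerivAt_rpow_mul (a := a) hs.1 (hderiv2 s hs.1)
      rw [hv.ode s hs.1] at h
      refine h.congr_of_eventuallyEq ?_
      filter_upwards [Ioi_mem_nhds hs.1] with x hx
      rw [hwv x hx]
  rw [hflux, Real.zero_rpow ha0.ne', zero_mul, sub_zero, hwv ζ hζ]

lemma eq_volterra (hv : IsRegularSolution a G v) (ha0 : 0 < a) (ha1 : a < 1)
    (hG : ContinuousOn G (Ici 0)) {ζ : ℝ} (hζ : 0 ≤ ζ) :
    v ζ = 1 + volterra a G v ζ := by
  have hvc : ContinuousOn v (Ici 0) := hv.contDiffOn_Ici.continuousOn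
  have hderiv : ∀ s, 0 < s → HasDerivAt v (deriv v s) s := fun s hs =>
    ((hv.contDiffOn_Ioi.differentiableOn (by norm_num) s hs).differentiableAt
      (Ioi_mem_nhds hs)).hasDerivAt
  have hT := weightedIntegral_eq_sub_of_hasDerivAt (β := -a) (g := v) (by linarith)
    (continuous_weightedIntegral (β := a - 1) (by linarith) (hG.mul hvc)).continuousOn hζ
    (hvc.mono Icc_subset_Ici_self) fun s hs => by
      convert hderiv s hs.1 using 1
      rw [← hv.rpow_mul_deriv_eq ha0 hG hs.1, ← mul_assoc, ← Real.rpow_add hs.1,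
        neg_add_cancel, Real.rpow_zero, one_mul]
  rw [volterra, hT, hv.apply_zero]
  ring

lemma eqOn (hv : IsRegularSolution a G v) (hw : IsRegularSolution a G w) (ha0 : 0 < a)
    (ha1 : a < 1) (hG : ContinuousOn G (Ici 0)) : EqOn v w (Ici 0) := by
  have hvc : ContinuousOn v (Ici 0) := hv.contDiffOn_Ici.continuousOn
  have hwc : ContinuousOn w (Ici 0) := hw.contDiffOn_Ici.continuousOn
  have hd := eqOn_zero_of_eq_volterra (d := v - w) ha0 hG (hvc.sub hwc) fun ζ hζ => by
    rw [volterra_sub ha0 ha1 hG hvc hwc, Pi.sub_apply, Pi.sub_apply]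
    linarith [hv.eq_volterra ha0 ha1 hG hζ, hw.eq_volterra ha0 ha1 hG hζ]
  exact fun ζ hζ => sub_eq_zero.1 (hd hζ)

lemma hasDerivWithinAt_zero (hv : IsRegularSolution a G v) (ha0 : 0 < a) (ha1 : a < 1)
    (hG : ContinuousOn G (Ici 0)) :
    HasDerivWithinAt v (G 0 / a) (Ici 0) 0 := by
  simpa [hv.apply_zero] using hasDerivWithinAt_zero_of_eq_volterra ha0 ha1 hG
    hv.contDiffOn_Ici.continuousOn fun ζ hζ => hv.eq_volterra ha0 ha1 hG hζ

end IsRegularSolution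

lemma exists_isRegularSolution {a : ℝ} {G : ℝ → ℝ} (ha0 : 0 < a) (ha1 : a < 1)
    (hG : ContinuousOn G (Ici 0)) : ∃ v, IsRegularSolution a G v := by
  have hv := continuousOn_volterraSeries ha0 ha1 hG
  have hfix : ∀ ζ : ℝ, 0 ≤ ζ → _ := fun ζ hζ => volterraSeries_eq ha0 ha1 hG hζ
  exact ⟨volterraSeries a G, contDiffOn_Ici_of_eq_volterra ha0 ha1 hG hv hfix,
    contDiffOn_Ioi_of_eq_volterra ha0 ha1 hG hv hfix,
    fun ζ hζ => ode_of_eq_volterra ha0 ha1 hG hv hfix hζ, by simpa [volterra] using hfix 0 le_rfl⟩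

end SingularODE

lemma regSol_iff_isRegularSolution {m B σ : ℝ} {v : ℝ → ℝ} :
    RegSol m B σ v ↔
      SingularODE.IsRegularSolution (m - 2)⁻¹ (fun t => B * t ^ (m / (m - 2)) - σ) v := by
  have hode : ∀ ζ, -ζ * deriv (deriv v) ζ - deriv v ζ / (m - 2) + B * ζ ^ (m / (m - 2)) * v ζ
      = σ * v ζ ↔ ζ * deriv (deriv v) ζ + (m - 2)⁻¹ * deriv v ζ
      = (B * ζ ^ (m / (m - 2)) - σ) * v ζ := fun ζ => by
    constructor <;> intro h <;> linear_combination -h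
  exact ⟨fun ⟨h1, h2, h3, h4⟩ => ⟨h1, h2, fun ζ hζ => (hode ζ).1 (h3 ζ hζ), h4⟩,
    fun ⟨h1, h2, h3, h4⟩ => ⟨h1, h2, fun ζ hζ => (hode ζ).2 (h3 ζ hζ), h4⟩⟩

theorem stmt6_general (m B : ℝ) (hm : 3 < m) (σ : ℝ) :
    (∃ v : ℝ → ℝ, RegSol m B σ v) ∧
    (∀ v w : ℝ → ℝ, RegSol m B σ v → RegSol m B σ w →
      Set.EqOn v w (Set.Ici 0)) ∧
    (∀ v : ℝ → ℝ, RegSol m B σ v →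
      derivWithin v (Set.Ici 0) 0 = -(m - 2) * σ) := by
  have hp : 0 < m / (m - 2) := div_pos (by linarith) (by linarith)
  have ha0 : 0 < (m - 2)⁻¹ := inv_pos.2 (by linarith)
  have ha1 : (m - 2)⁻¹ < 1 := inv_lt_one_of_one_lt₀ (by linarith)
  have hG : ContinuousOn (fun t : ℝ => B * t ^ (m / (m - 2)) - σ) (Ici 0) :=
    ((continuous_const.mul (Real.continuous_rpow_const hp.le)).sub continuous_const).continuousOn
  refine ⟨?_, fun v w hv hw => ?_, fun v hv => ?_⟩
  · obtain ⟨v, hv⟩ := SingularODE.exists_isRegularSolution ha0 ha1 hG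
    exact ⟨v, regSol_iff_isRegularSolution.2 hv⟩
  · exact (regSol_iff_isRegularSolution.1 hv).eqOn (regSol_iff_isRegularSolution.1 hw) ha0 ha1 hG
  · rw [((regSol_iff_isRegularSolution.1 hv).hasDerivWithinAt_zero ha0 ha1 hG).derivWithin
      (uniqueDiffOn_Ici 0 0 self_mem_Ici), Real.zero_rpow hp.ne']
    field_simp
    ring

theorem stmt6 (m B : ℝ) (hm : 3 < m) (hB : 0 < B) (σ : ℝ) :
    (∃ v : ℝ → ℝ, RegSol m B σ v) ∧
    (∀ v w : ℝ → ℝ, RegSol m B σ v → RegSol m B σ w →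
      Set.EqOn v w (Set.Ici 0)) ∧
    (∀ v : ℝ → ℝ, RegSol m B σ v →
      derivWithin v (Set.Ici 0) 0 = -(m - 2) * σ) :=
  stmt6_general m B hm σ
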